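/- arXiv:1312.2161 — 2 statements merged into one kernel-verified Lean document; each statement's English description precedes it below -/
import Mathlib

section
/- Let m be a natural number and suppose ι is a C^{m,γ}-embedding with constant C. Then the evaluation map E : ℝⁿ × X → ℝ, E(x, f) = f̂(x), is of class C^m (i.e. ContDiff ℝ m E on the product Banach space ℝⁿ × X). -/
/-!
`E(x, f) = evₓ f` is the bounded bilinear pairing applied to `(evₓ, f)`, so it suffices that
`x ↦ evₓ ∈ X →L[ℝ] ℝ` is `C^m` in operator norm. This goes by induction on `m`, for families with
values in any normed space. For `m = 0` the Hölder bound makes `x ↦ evₓ` Hölder in operator norm.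
For the step, the derivatives `f ↦ Df̂` form a family satisfying the hypotheses with `m - 1`, so
their evaluation map is continuous in operator norm; then the mean value inequality for
`f̂ - Df̂(x)`, uniform over `‖f‖ ≤ 1`, shows that `x ↦ evₓ` is differentiable in operator norm
with derivative the (flipped) evaluation map of the derivatives.
-/

/-- `ι : X →ₗ[ℝ] ((Fin n → ℝ) → ℝ)` is a `C^{m,γ}`-embedding with constant `C`:
for every `f : X` the function `f̂ = ι f` is `m`-times continuously differentiable,
all iterated derivatives up to order `m` are bounded by `C‖f‖`, and the `m`-th
iterated derivative is `γ`-Hölder with constant `C‖f‖`. -/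
def IsCmGammaEmbedding {X : Type*} [NormedAddCommGroup X] [NormedSpace ℝ X]
    (n : ℕ) (ι : X →ₗ[ℝ] ((Fin n → ℝ) → ℝ)) (m : ℕ) (γ C : ℝ) : Prop :=
  ∀ f : X,
    ContDiff ℝ m (ι f) ∧
    (∀ i : ℕ, i ≤ m → ∀ x : Fin n → ℝ, ‖iteratedFDeriv ℝ i (ι f) x‖ ≤ C * ‖f‖) ∧
    ∀ x y : Fin n → ℝ,
      ‖iteratedFDeriv ℝ m (ι f) x - iteratedFDeriv ℝ m (ι f) y‖ ≤ C * ‖f‖ * ‖x - y‖ ^ γ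

open Filter Asymptotics Metric Topology ContinuousLinearMap

universe u

section

variable {E G : Type*} [NormedAddCommGroup E] [NormedAddCommGroup G]

theorem continuous_of_norm_sub_le_mul_rpow {f : E → G} {C γ : ℝ} (hγ : 0 < γ)
    (h : ∀ x y, ‖f x - f y‖ ≤ C * ‖x - y‖ ^ γ) : Continuous f := by
  refine continuous_iff_continuousAt.2 fun x₀ => tendsto_iff_norm_sub_tendsto_zero.2 ?_
  have hlim : Tendsto (fun x => C * ‖x - x₀‖ ^ γ) (𝓝 x₀) (𝓝 0) := by
    have := (continuous_const.mul ((continuous_id.sub continuous_const).norm.rpow_const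
      fun _ => Or.inr hγ.le)).tendsto x₀ (f := fun x : E => C * ‖x - x₀‖ ^ γ)
    simpa [Real.zero_rpow hγ.ne'] using this
  exact squeeze_zero (fun _ => norm_nonneg _) (fun x => h x x₀) hlim

end

section

variable {X : Type*} [NormedAddCommGroup X] [NormedSpace ℝ X]
  {E F : Type*} [NormedAddCommGroup E] [NormedSpace ℝ E] [NormedAddCommGroup F] [NormedSpace ℝ F]

theorem hasFDerivAt_of_hasFDerivAt_apply {e : E → X →L[ℝ] F} {e' : E → X →L[ℝ] E →L[ℝ] F}
    {x : E} (hd : ∀ y g, HasFDerivAt (fun z => e z g) (e' y g) y) (hc : ContinuousAt e' x) :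
    HasFDerivAt e (e' x).flip x := by
  refine HasFDerivAt.of_isLittleO (isLittleO_iff.2 fun ε hε => ?_)
  obtain ⟨δ, hδ, hclose⟩ :=
    Metric.eventually_nhds_iff_ball.1 (hc.eventually (ball_mem_nhds (e' x) hε))
  filter_upwards [ball_mem_nhds x hδ] with y hy
  refine opNorm_le_bound _ (by positivity) fun g => ?_
  have hderiv_close : ∀ z ∈ ball x δ, ‖e' z g - e' x g‖ ≤ ε * ‖g‖ := fun z hz =>
    calc ‖e' z g - e' x g‖ = ‖(e' z - e' x) g‖ := rfl
      _ ≤ ‖e' z - e' x‖ * ‖g‖ := le_opNorm _ _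
      _ ≤ ε * ‖g‖ := by
        gcongr
        exact (dist_eq_norm (e' z) (e' x) ▸ hclose z hz).le
  calc ‖(e y - e x - (e' x).flip (y - x)) g‖ = ‖e y g - e x g - e' x g (y - x)‖ := rfl
    _ ≤ ε * ‖g‖ * ‖y - x‖ :=
      (convex_ball x δ).norm_image_sub_le_of_norm_hasFDerivWithin_le'
        (fun z _ => (hd z g).hasFDerivWithinAt) hderiv_close (mem_ball_self hδ) hy
    _ = ε * ‖y - x‖ * ‖g‖ := by ring

end

section

variable {X : Type*} [NormedAddCommGroup X] [NormedSpace ℝ X]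
  {E F : Type u} [NormedAddCommGroup E] [NormedSpace ℝ E] [NormedAddCommGroup F] [NormedSpace ℝ F]

/-- `IsCmGammaEmbedding` for a linear family of maps between arbitrary normed spaces. -/
def IsUniformlyCmGamma (ι : X →ₗ[ℝ] (E → F)) (m : ℕ) (γ C : ℝ) : Prop :=
  ∀ f : X,
    ContDiff ℝ m (ι f) ∧
    (∀ i : ℕ, i ≤ m → ∀ x : E, ‖iteratedFDeriv ℝ i (ι f) x‖ ≤ C * ‖f‖) ∧
    ∀ x y : E,
      ‖iteratedFDeriv ℝ m (ι f) x - iteratedFDeriv ℝ m (ι f) y‖ ≤ C * ‖f‖ * ‖x - y‖ ^ γ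

noncomputable def evalCLM (ι : X →ₗ[ℝ] (E → F)) (C : ℝ) (hb : ∀ f x, ‖ι f x‖ ≤ C * ‖f‖)
    (x : E) : X →L[ℝ] F :=
  LinearMap.mkContinuous ((LinearMap.proj x).comp ι) C fun f => hb f x

noncomputable def fderivLinearMap (ι : X →ₗ[ℝ] (E → F)) (hd : ∀ f, Differentiable ℝ (ι f)) :
    X →ₗ[ℝ] (E → E →L[ℝ] F) where
  toFun f := fderiv ℝ (ι f)
  map_add' f g := by
    rw [map_add]
    exact funext fun x => fderiv_add (hd f x) (hd g x)
  map_smul' c f := by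
    rw [map_smul]
    exact funext fun x => fderiv_const_smul (hd f x) c

theorem norm_iteratedFDeriv_fderiv_sub (f : E → F) (k : ℕ) (x y : E) :
    ‖iteratedFDeriv ℝ k (fderiv ℝ f) x - iteratedFDeriv ℝ k (fderiv ℝ f) y‖ =
      ‖iteratedFDeriv ℝ (k + 1) f x - iteratedFDeriv ℝ (k + 1) f y‖ := by
  rw [iteratedFDeriv_succ_eq_comp_right (x := x), iteratedFDeriv_succ_eq_comp_right (x := y),
    Function.comp_apply, Function.comp_apply, ← LinearIsometryEquiv.map_sub,
    LinearIsometryEquiv.norm_map]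

namespace IsUniformlyCmGamma

variable {ι : X →ₗ[ℝ] (E → F)} {m : ℕ} {γ C : ℝ}

theorem norm_apply_le (h : IsUniformlyCmGamma ι m γ C) (f : X) (x : E) :
    ‖ι f x‖ ≤ C * ‖f‖ := by
  simpa using (h f).2.1 0 m.zero_le x

theorem differentiable (h : IsUniformlyCmGamma ι (m + 1) γ C) (f : X) :
    Differentiable ℝ (ι f) :=
  (h f).1.differentiable (by simp)

theorem fderiv (h : IsUniformlyCmGamma ι (m + 1) γ C) :
    IsUniformlyCmGamma (fderivLinearMap ι h.differentiable) m γ C := fun f =>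
  ⟨(h f).1.fderiv_right (by push_cast; rfl),
    fun i hi x =>
      norm_iteratedFDeriv_fderiv (𝕜 := ℝ) (f := ι f) ▸ (h f).2.1 (i + 1) (by omega) x,
    fun x y => norm_iteratedFDeriv_fderiv_sub (ι f) m x y ▸ (h f).2.2 x y⟩

theorem norm_evalCLM_sub_le (h : IsUniformlyCmGamma ι 0 γ C) (hC : 0 ≤ C) (x y : E) :
    ‖evalCLM ι C h.norm_apply_le x - evalCLM ι C h.norm_apply_le y‖ ≤ C * ‖x - y‖ ^ γ := by
  refine opNorm_le_bound _ (by positivity) fun f => ?_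
  have hf := (h f).2.2 x y
  rw [iteratedFDeriv_zero_eq_comp, Function.comp_apply, Function.comp_apply,
    ← LinearIsometryEquiv.map_sub, LinearIsometryEquiv.norm_map] at hf
  calc ‖(evalCLM ι C h.norm_apply_le x - evalCLM ι C h.norm_apply_le y) f‖
      = ‖ι f x - ι f y‖ := rfl
    _ ≤ C * ‖x - y‖ ^ γ * ‖f‖ := by linarith

theorem contDiff_evalCLM (hγ : 0 < γ) (hC : 0 ≤ C) (h : IsUniformlyCmGamma ι m γ C) :
    ContDiff ℝ m (evalCLM ι C h.norm_apply_le) := by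
  induction m generalizing F with
  | zero =>
    exact contDiff_zero.2 (continuous_of_norm_sub_le_mul_rpow hγ (h.norm_evalCLM_sub_le hC))
  | succ m ih =>
    have hD := ih h.fderiv
    have hflip : ContDiff ℝ m fun T : X →L[ℝ] E →L[ℝ] F => T.flip := by
      simpa only [coe_flipₗᵢ] using LinearIsometryEquiv.contDiff (𝕜 := ℝ)
        (E := X →L[ℝ] E →L[ℝ] F) (F := E →L[ℝ] X →L[ℝ] F) (n := m) (flipₗᵢ ℝ X E F)
    rw [Nat.cast_succ, contDiff_succ_iff_hasFDerivAt]
    exact ⟨fun x => (evalCLM _ C h.fderiv.norm_apply_le x).flip,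
      hflip.comp hD,
      fun x => hasFDerivAt_of_hasFDerivAt_apply (fun y f => (h.differentiable f y).hasFDerivAt)
        hD.continuous.continuousAt⟩

end IsUniformlyCmGamma

end

theorem eval_contDiff_general {X : Type*} [NormedAddCommGroup X] [NormedSpace ℝ X]
    {n : ℕ} {γ C : ℝ} (hγ : 0 < γ) (hC : 0 ≤ C)
    (ι : X →ₗ[ℝ] ((Fin n → ℝ) → ℝ)) (m : ℕ)
    (hemb : IsCmGammaEmbedding n ι m γ C) :
    ContDiff ℝ m (fun p : (Fin n → ℝ) × X => ι p.2 p.1) := by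
  have hfamily : IsUniformlyCmGamma ι m γ C := hemb
  have hev := hfamily.contDiff_evalCLM hγ hC
  exact isBoundedBilinearMap_apply.contDiff.comp ((hev.comp contDiff_fst).prodMk contDiff_snd)

/-- If `ι` is a `C^{m,γ}`-embedding with constant `C`, then the evaluation map
`E : ℝⁿ × X → ℝ`, `E(x, f) = f̂(x)`, is of class `C^m`. -/
theorem eval_contDiff {X : Type*} [NormedAddCommGroup X] [NormedSpace ℝ X] [CompleteSpace X]
    {n : ℕ} (hn : 0 < n) {γ C : ℝ} (hγ : 0 < γ) (hγ1 : γ < 1) (hC : 0 ≤ C)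
    (ι : X →ₗ[ℝ] ((Fin n → ℝ) → ℝ)) (m : ℕ)
    (hemb : IsCmGammaEmbedding n ι m γ C) :
    ContDiff ℝ m (fun p : (Fin n → ℝ) × X => ι p.2 p.1) :=
  eval_contDiff_general hγ hC ι m hemb
end

section
/- Let m ≥ 1 be a natural number and suppose ι is a C^{m,γ}-embedding with constant C. Then the map E¹ : ℝⁿ × X → (ℝⁿ →L[ℝ] ℝ) defined by E¹(x, f) = fderiv ℝ f̂ x (the Fréchet derivative of f̂ at x, an element of the dual of ℝⁿ) is of class C^{m−1}. -/
theorem continuous_of_norm_sub_le_rpow {E F : Type*} [SeminormedAddCommGroup E]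
    [SeminormedAddCommGroup F] {f : E → F} {C γ : ℝ} (hγ : 0 < γ)
    (hf : ∀ x y, ‖f x - f y‖ ≤ C * ‖x - y‖ ^ γ) : Continuous f := by
  refine continuous_iff_continuousAt.2 fun x₀ => tendsto_iff_norm_sub_tendsto_zero.2 ?_
  refine squeeze_zero (fun _ => norm_nonneg _) (fun x => hf x x₀) ?_
  have : Continuous fun x => C * ‖x - x₀‖ ^ γ := by fun_prop (disch := positivity)
  simpa [Real.zero_rpow hγ.ne'] using this.tendsto x₀

section

variable {𝕜 : Type*} [RCLike 𝕜]
  {V : Type*} [NormedAddCommGroup V] [NormedSpace 𝕜 V]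
  {X : Type*} [NormedAddCommGroup X] [NormedSpace 𝕜 X]
  {W : Type*} [NormedAddCommGroup W] [NormedSpace 𝕜 W]

theorem hasFDerivAt_of_hasFDerivAt_apply_s14 {F : V → X →L[𝕜] W} {F' : V → V →L[𝕜] X →L[𝕜] W}
    {x₀ : V} (hF : ∀ x f, HasFDerivAt (fun y => F y f) ((F' x).flip f) x)
    (hF' : ContinuousAt F' x₀) : HasFDerivAt F (F' x₀) x₀ := by
  refine HasFDerivAt.of_isLittleO <| Asymptotics.isLittleO_iff.2 fun ε hε => ?_
  let : NormedSpace ℝ V := .restrictScalars ℝ 𝕜 V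
  obtain ⟨δ, hδ, hF'δ⟩ := (Metric.continuousAt_iff (β := V →L[𝕜] X →L[𝕜] W)).1 hF' ε hε
  filter_upwards [Metric.ball_mem_nhds x₀ hδ] with y hy
  refine ContinuousLinearMap.opNorm_le_bound _ (by positivity) fun f => ?_
  have hderiv_close : ∀ z ∈ Metric.ball x₀ δ, ‖(F' z).flip f - (F' x₀).flip f‖ ≤ ε * ‖f‖ :=
    fun z hz => calc
      ‖(F' z).flip f - (F' x₀).flip f‖ = ‖(F' z - F' x₀).flip f‖ := rfl
      _ ≤ ‖F' z - F' x₀‖ * ‖f‖ := (ContinuousLinearMap.opNorm_flip (F' z - F' x₀)) ▸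
        ContinuousLinearMap.le_opNorm _ _
      _ ≤ ε * ‖f‖ := by
        gcongr
        exact (dist_eq_norm (F' z) (F' x₀) ▸ hF'δ hz).le
  have := (convex_ball x₀ δ).norm_image_sub_le_of_norm_hasFDerivWithin_le'
    (fun x _ => (hF x f).hasFDerivWithinAt) hderiv_close (Metric.mem_ball_self hδ) hy
  simpa [mul_right_comm] using this

variable (𝕜 V X W) in
noncomputable def curryLeftFlipCLM (k : ℕ) :
    (X →L[𝕜] ContinuousMultilinearMap 𝕜 (fun _ : Fin (k + 1) => V) W) →L[𝕜]
      V →L[𝕜] X →L[𝕜] ContinuousMultilinearMap 𝕜 (fun _ : Fin k => V) W :=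
  (ContinuousLinearMap.flipₗᵢ 𝕜 X V _).toContinuousLinearEquiv.toContinuousLinearMap ∘L
    ContinuousLinearMap.compL 𝕜 X _ _
      (continuousMultilinearCurryLeftEquiv 𝕜 (fun _ : Fin (k + 1) => V) W).toContinuousLinearEquiv

variable (ι : X →ₗ[𝕜] V → W) {C : ℝ}

noncomputable def iteratedFDerivCLM (k : ℕ) (hι : ∀ f, ContDiff 𝕜 k (ι f))
    (hbd : ∀ f x, ‖iteratedFDeriv 𝕜 k (ι f) x‖ ≤ C * ‖f‖) (x : V) :
    X →L[𝕜] ContinuousMultilinearMap 𝕜 (fun _ : Fin k => V) W :=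
  LinearMap.mkContinuous
    { toFun := fun f => iteratedFDeriv 𝕜 k (ι f) x
      map_add' := fun f g => by
        rw [map_add]
        exact iteratedFDeriv_add_apply (hι f).contDiffAt (hι g).contDiffAt
      map_smul' := fun c f => by
        rw [map_smul]
        exact iteratedFDeriv_const_smul_apply (hι f).contDiffAt }
    C fun f => hbd f x

@[simp]
theorem iteratedFDerivCLM_apply {k : ℕ} (hι : ∀ f, ContDiff 𝕜 k (ι f))
    (hbd : ∀ f x, ‖iteratedFDeriv 𝕜 k (ι f) x‖ ≤ C * ‖f‖) (x : V) (f : X) :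
    iteratedFDerivCLM ι k hι hbd x f = iteratedFDeriv 𝕜 k (ι f) x :=
  rfl

theorem continuous_iteratedFDerivCLM {k : ℕ} (hι : ∀ f, ContDiff 𝕜 k (ι f))
    (hbd : ∀ f x, ‖iteratedFDeriv 𝕜 k (ι f) x‖ ≤ C * ‖f‖) (hC : 0 ≤ C) {γ : ℝ} (hγ : 0 < γ)
    (hhol : ∀ f x y,
      ‖iteratedFDeriv 𝕜 k (ι f) x - iteratedFDeriv 𝕜 k (ι f) y‖ ≤ C * ‖f‖ * ‖x - y‖ ^ γ) :
    Continuous (iteratedFDerivCLM ι k hι hbd) :=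
  continuous_of_norm_sub_le_rpow (f := iteratedFDerivCLM ι k hι hbd) hγ fun x y =>
    ContinuousLinearMap.opNorm_le_bound _ (by positivity) fun f =>
      (hhol f x y).trans_eq (mul_right_comm _ _ _)

theorem hasFDerivAt_iteratedFDerivCLM {k : ℕ} (hι : ∀ f, ContDiff 𝕜 (k + 1 : ℕ) (ι f))
    (hbd : ∀ f x, ‖iteratedFDeriv 𝕜 k (ι f) x‖ ≤ C * ‖f‖)
    (hbd' : ∀ f x, ‖iteratedFDeriv 𝕜 (k + 1) (ι f) x‖ ≤ C * ‖f‖)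
    (hcont : Continuous (iteratedFDerivCLM ι (k + 1) hι hbd')) (x : V) :
    HasFDerivAt (iteratedFDerivCLM ι k (fun f => (hι f).of_le (by norm_cast; omega)) hbd)
      (curryLeftFlipCLM 𝕜 V X W k (iteratedFDerivCLM ι (k + 1) hι hbd' x)) x := by
  apply hasFDerivAt_of_hasFDerivAt_apply_s14
    (F' := fun x => curryLeftFlipCLM 𝕜 V X W k (iteratedFDerivCLM ι (k + 1) hι hbd' x))
  · exact fun x f =>
      ((hι f).differentiable_iteratedFDeriv (m := k) (by norm_cast; omega) x).hasFDerivAt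
  · exact ((curryLeftFlipCLM 𝕜 V X W k).continuous.comp hcont).continuousAt

theorem contDiff_iteratedFDerivCLM {m : ℕ} (hι : ∀ f, ContDiff 𝕜 m (ι f))
    (hbd : ∀ f, ∀ i ≤ m, ∀ x, ‖iteratedFDeriv 𝕜 i (ι f) x‖ ≤ C * ‖f‖) (hC : 0 ≤ C)
    {γ : ℝ} (hγ : 0 < γ)
    (hhol : ∀ f x y,
      ‖iteratedFDeriv 𝕜 m (ι f) x - iteratedFDeriv 𝕜 m (ι f) y‖ ≤ C * ‖f‖ * ‖x - y‖ ^ γ)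
    (d k : ℕ) (hkd : k + d = m) :
    ContDiff 𝕜 d (iteratedFDerivCLM ι k (fun f => (hι f).of_le (by norm_cast; omega))
      (fun f => hbd f k (by omega))) := by
  induction d generalizing k with
  | zero =>
    obtain rfl : k = m := hkd
    rw [Nat.cast_zero, contDiff_zero]
    exact continuous_iteratedFDerivCLM ι _ _ hC hγ hhol
  | succ d ih =>
    have hder := hasFDerivAt_iteratedFDerivCLM ι (k := k)
      (fun f => (hι f).of_le (by norm_cast; omega))
      (fun f => hbd f k (by omega)) (fun f => hbd f (k + 1) (by omega))
      (ih (k + 1) (by omega)).continuous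
    rw [Nat.cast_succ, contDiff_succ_iff_fderiv]
    refine ⟨fun x => (hder x).differentiableAt, by simp, ?_⟩
    rw [funext fun x => (hder x).fderiv]
    have := ih (k + 1) (by omega)
    fun_prop

theorem contDiff_fderiv_uncurry {m : ℕ} (hm : 1 ≤ m) (hι : ∀ f, ContDiff 𝕜 m (ι f))
    (hbd : ∀ f, ∀ i ≤ m, ∀ x, ‖iteratedFDeriv 𝕜 i (ι f) x‖ ≤ C * ‖f‖) (hC : 0 ≤ C)
    {γ : ℝ} (hγ : 0 < γ)
    (hhol : ∀ f x y,
      ‖iteratedFDeriv 𝕜 m (ι f) x - iteratedFDeriv 𝕜 m (ι f) y‖ ≤ C * ‖f‖ * ‖x - y‖ ^ γ) :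
    ContDiff 𝕜 (m - 1 : ℕ) fun p : V × X => fderiv 𝕜 (ι p.2) p.1 := by
  have hΦ := contDiff_iteratedFDerivCLM ι hι hbd hC hγ hhol (m - 1) 1 (by omega)
  have := (continuousMultilinearCurryFin1 𝕜 V W).contDiff.comp
    ((hΦ.comp contDiff_fst).clm_apply contDiff_snd)
  convert this using 2 with p
  ext v
  simp [iteratedFDeriv_one_apply]

end

theorem fderiv_eval_contDiff_general {X : Type*} [NormedAddCommGroup X] [NormedSpace ℝ X]
    {n : ℕ} {γ C : ℝ} (hγ : 0 < γ) (hC : 0 ≤ C)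
    (ι : X →ₗ[ℝ] ((Fin n → ℝ) → ℝ)) (m : ℕ) (hm : 1 ≤ m)
    (hemb : IsCmGammaEmbedding n ι m γ C) :
    ContDiff ℝ (m - 1 : ℕ)
      (fun p : (Fin n → ℝ) × X => fderiv ℝ (ι p.2) p.1) :=
  contDiff_fderiv_uncurry ι hm (fun f => (hemb f).1) (fun f => (hemb f).2.1) hC hγ
    (fun f => (hemb f).2.2)

/-- If `m ≥ 1` and `ι` is a `C^{m,γ}`-embedding with constant `C`, then the map
`E¹ : ℝⁿ × X → (ℝⁿ →L[ℝ] ℝ)`, `E¹(x, f) = fderiv ℝ f̂ x`, is of class `C^{m−1}`. -/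
theorem fderiv_eval_contDiff {X : Type*} [NormedAddCommGroup X] [NormedSpace ℝ X]
    [CompleteSpace X]
    {n : ℕ} (hn : 0 < n) {γ C : ℝ} (hγ : 0 < γ) (hγ1 : γ < 1) (hC : 0 ≤ C)
    (ι : X →ₗ[ℝ] ((Fin n → ℝ) → ℝ)) (m : ℕ) (hm : 1 ≤ m)
    (hemb : IsCmGammaEmbedding n ι m γ C) :
    ContDiff ℝ (m - 1 : ℕ)
      (fun p : (Fin n → ℝ) × X => fderiv ℝ (ι p.2) p.1) :=
  fderiv_eval_contDiff_general hγ hC ι m hm hemb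
end
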